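/- (One-sided Lipschitz velocity field.) Let (x^i)_{i=1}^N, (v^i)_{i=1}^{N−1} be a solution of the particle system on (0, t'). Then there exists a constant C ≥ 0 such that for all t ∈ [0, t') and all x, y ∈ ℝ: (A(x, t) − A(y, t))(x − y) ≤ C (x − y)². -/

import Mathlib

open MeasureTheory Set Filter
open scoped ENNReal NNReal

/-- The velocity field `a(v) = f(v)/v`, extended by `a(0) = f'(0)`. -/
noncomputable def aF (f : ℝ → ℝ) (v : ℝ) : ℝ :=
  if v = 0 then deriv f 0 else f v / v

/-- The particle velocity `V(v_l, v_r)`: the minimum of `a` over `[v_l, v_r]` if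
`v_l ≤ v_r`, and the maximum of `a` over `[v_r, v_l]` if `v_r ≤ v_l`. -/
noncomputable def pV (f : ℝ → ℝ) (vl vr : ℝ) : ℝ :=
  if vl ≤ vr then sInf (aF f '' Set.Icc vl vr) else sSup (aF f '' Set.Icc vr vl)

/-- A solution of the particle system `ẋ^i = V(v^{i-1}, v^i)`,
`v^i_t = v₀^i Δx₀^i / Δx^i_t` on the time interval `[0, t')`, with the conventions
`v⁰ ≡ 0`, `v^N ≡ 0`. -/
structure IsParticleSol (f : ℝ → ℝ) (N : ℕ) (x₀ v₀ : ℕ → ℝ) (t' : ℝ)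
    (x v : ℕ → ℝ → ℝ) : Prop where
  init : ∀ i, 1 ≤ i → i ≤ N → x i 0 = x₀ i
  cont : ∀ i, 1 ≤ i → i ≤ N → ContinuousOn (x i) (Set.Ico 0 t')
  order : ∀ t ∈ Set.Ioo (0:ℝ) t', ∀ i, 1 ≤ i → i < N → x i t < x (i+1) t
  vzero : ∀ t, v 0 t = 0
  vN : ∀ t, v N t = 0
  ode : ∀ i, 1 ≤ i → i ≤ N → ∀ t ∈ Set.Ioo (0:ℝ) t',
    HasDerivAt (x i) (pV f (v (i-1) t) (v i t)) t
  mass : ∀ i, 1 ≤ i → i < N → ∀ t ∈ Set.Ico (0:ℝ) t',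
    v i t = v₀ i * (x₀ (i+1) - x₀ i) / (x (i+1) t - x i t)


/-!
Between two consecutive particles `A(·, t)` is affine with slope `(V^{i+1} - V^i) / (x^{i+1} - x^i)`,
and outside the particles it is constant, so it suffices to bound these slopes from above uniformly
in `t`. The numerator is at most `2K`, since `|a| ≤ K`. If `v₀^i > 0`, the gap `x^{i+1} - x^i` equals
`v₀^i Δx₀^i / v^i`, and a maximum principle keeps every `v^i` below `max_j v₀^j`: at a velocity that
dominates its neighbours, `V^{i+1} ≥ V^i`, so the gap grows and the velocity decreases. If `v₀^i = 0`,
then `v^i ≡ 0` is dominated by its neighbours, which forces `V^{i+1} ≤ V^i`.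
-/

open scoped Topology

section Velocity

variable {f : ℝ → ℝ} {K : ℝ≥0}

theorem abs_aF_le (hf : LipschitzWith K f) (hf0 : f 0 = 0) (w : ℝ) : |aF f w| ≤ K := by
  unfold aF
  split_ifs with hw
  · exact norm_deriv_le_of_lipschitz hf
  · rw [abs_div, div_le_iff₀ (abs_pos.2 hw)]
    simpa [hf0, Real.dist_eq] using hf.dist_le_mul w 0

theorem bddBelow_image_aF (hf : LipschitzWith K f) (hf0 : f 0 = 0) (s : Set ℝ) :
    BddBelow (aF f '' s) :=
  ⟨-K, by rintro _ ⟨w, -, rfl⟩; exact neg_le_of_abs_le (abs_aF_le hf hf0 w)⟩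

theorem bddAbove_image_aF (hf : LipschitzWith K f) (hf0 : f 0 = 0) (s : Set ℝ) :
    BddAbove (aF f '' s) :=
  ⟨K, by rintro _ ⟨w, -, rfl⟩; exact le_of_abs_le (abs_aF_le hf hf0 w)⟩

theorem pV_le_aF (hf : LipschitzWith K f) (hf0 : f 0 = 0) {vl vr w : ℝ} (h : vl ≤ vr)
    (hw : w ∈ Icc vl vr) : pV f vl vr ≤ aF f w := by
  rw [pV, if_pos h]
  exact csInf_le (bddBelow_image_aF hf hf0 _) ⟨w, hw, rfl⟩

theorem aF_le_pV (hf : LipschitzWith K f) (hf0 : f 0 = 0) {vl vr w : ℝ} (h : vr ≤ vl)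
    (hw : w ∈ Icc vr vl) : aF f w ≤ pV f vl vr := by
  rw [pV]
  split_ifs with h'
  · obtain rfl : vl = vr := le_antisymm h' h
    obtain rfl : w = vl := le_antisymm hw.2 hw.1
    rw [Icc_self, image_singleton, csInf_singleton]
  · exact le_csSup (bddAbove_image_aF hf hf0 _) ⟨w, hw, rfl⟩

theorem abs_pV_le (hf : LipschitzWith K f) (hf0 : f 0 = 0) (vl vr : ℝ) : |pV f vl vr| ≤ K := by
  have hne : (aF f '' Icc (min vl vr) (max vl vr)).Nonempty :=
    ⟨_, vl, ⟨min_le_left _ _, le_max_left _ _⟩, rfl⟩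
  have hbound : ∀ y ∈ aF f '' Icc (min vl vr) (max vl vr), |y| ≤ K := by
    rintro _ ⟨w, -, rfl⟩
    exact abs_aF_le hf hf0 w
  rw [pV]
  split_ifs with h
  · rw [min_eq_left h, max_eq_right h] at hne hbound
    refine abs_le.2 ⟨le_csInf hne fun y hy ↦ (abs_le.1 (hbound y hy)).1, ?_⟩
    obtain ⟨y, hy⟩ := hne
    exact (csInf_le (bddBelow_image_aF hf hf0 _) hy).trans (abs_le.1 (hbound y hy)).2
  · rw [min_eq_right (not_le.1 h).le, max_eq_left (not_le.1 h).le] at hne hbound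
    refine abs_le.2 ⟨?_, csSup_le hne fun y hy ↦ (abs_le.1 (hbound y hy)).2⟩
    obtain ⟨y, hy⟩ := hne
    exact (abs_le.1 (hbound y hy)).1.trans (le_csSup (bddAbove_image_aF hf hf0 _) hy)

theorem pV_le_pV_of_local_max (hf : LipschitzWith K f) (hf0 : f 0 = 0) {vl vm vr : ℝ}
    (hl : vl ≤ vm) (hr : vr ≤ vm) : pV f vl vm ≤ pV f vm vr :=
  (pV_le_aF hf hf0 hl ⟨hl, le_rfl⟩).trans (aF_le_pV hf hf0 hr ⟨hr, le_rfl⟩)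

theorem pV_le_pV_of_local_min (hf : LipschitzWith K f) (hf0 : f 0 = 0) {vl vm vr : ℝ}
    (hl : vm ≤ vl) (hr : vm ≤ vr) : pV f vm vr ≤ pV f vl vm :=
  (pV_le_aF hf hf0 hr ⟨le_rfl, hr⟩).trans (aF_le_pV hf hf0 hl ⟨le_rfl, hl⟩)

end Velocity

section MaxPrinciple

variable {ι : Type*} {s : Finset ι} (hs : s.Nonempty) {g : ι → ℝ → ℝ}

theorem eventually_slope_sup'_lt {z r : ℝ} (hr : 0 < r)
    (hcont : ∀ j ∈ s, ContinuousWithinAt (g j) (Ioi z) z)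
    (hderiv : ∀ j ∈ s, (∀ k ∈ s, g k z ≤ g j z) →
      ∃ d ≤ 0, HasDerivWithinAt (g j) d (Ioi z) z) :
    ∀ᶠ w in 𝓝[>] z, slope (fun t ↦ s.sup' hs (g · t)) z w < r := by
  have hbelow : ∀ j ∈ s, ∀ᶠ w in 𝓝[>] z, g j w < s.sup' hs (g · z) + r * (w - z) := by
    intro j hj
    by_cases hmax : ∀ k ∈ s, g k z ≤ g j z
    · obtain ⟨d, hd, hder⟩ := hderiv j hj hmax
      have hslope := (hasDerivWithinAt_iff_tendsto_slope' (lt_irrefl z)).1 hder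
      have hjz : s.sup' hs (g · z) = g j z :=
        le_antisymm (Finset.sup'_le _ _ hmax) (Finset.le_sup' (g · z) hj)
      filter_upwards [hslope.eventually_lt_const (hd.trans_lt hr), self_mem_nhdsWithin]
        with w hw hwz
      rw [slope_def_field, div_lt_iff₀ (sub_pos.2 hwz)] at hw
      linarith
    · push Not at hmax
      obtain ⟨k, hk, hlt⟩ := hmax
      have hjz : g j z < s.sup' hs (g · z) := hlt.trans_le (Finset.le_sup' (g · z) hk)
      filter_upwards [(hcont j hj).eventually_lt_const hjz, self_mem_nhdsWithin] with w hw hwz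
      nlinarith [mul_pos hr (sub_pos.2 (show z < w from hwz))]
  filter_upwards [(Filter.eventually_all_finset s).2 hbelow, self_mem_nhdsWithin] with w hw hwz
  rw [slope_def_field, div_lt_iff₀ (sub_pos.2 hwz)]
  linarith [(Finset.sup'_lt_iff hs).2 hw]

theorem sup'_le_sup'_of_hasDerivWithinAt_nonpos {a b : ℝ} (hab : a ≤ b)
    (hcont : ∀ j ∈ s, ContinuousOn (g j) (Icc a b))
    (hderiv : ∀ z ∈ Ico a b, ∀ j ∈ s, (∀ k ∈ s, g k z ≤ g j z) →
      ∃ d ≤ 0, HasDerivWithinAt (g j) d (Ioi z) z) :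
    s.sup' hs (g · b) ≤ s.sup' hs (g · a) :=
  image_le_of_liminf_slope_right_le_deriv_boundary (B' := 0)
    (ContinuousOn.finset_sup'_apply hs hcont) le_rfl continuousOn_const
    (fun z _ ↦ hasDerivWithinAt_const z _ _)
    (fun z hz _ hr ↦ (eventually_slope_sup'_lt hs hr
      (fun j hj ↦ (hcont j hj z (Ico_subset_Icc_self hz)).mono_of_mem_nhdsWithin
        (Icc_mem_nhdsGT_of_mem hz))
      (hderiv z hz)).frequently)
    ⟨hab, le_rfl⟩

theorem sup'_le_sup'_of_hasDerivAt_nonpos {a b : ℝ} (hab : a ≤ b)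
    (hcont : ∀ j ∈ s, ContinuousOn (g j) (Icc a b))
    (hderiv : ∀ z ∈ Ioo a b, ∀ j ∈ s, (∀ k ∈ s, g k z ≤ g j z) →
      ∃ d ≤ 0, HasDerivAt (g j) d z) :
    s.sup' hs (g · b) ≤ s.sup' hs (g · a) := by
  rcases hab.eq_or_lt with rfl | hab
  · rfl
  have hlim : Tendsto (fun t ↦ s.sup' hs (g · t)) (𝓝[>] a) (𝓝 (s.sup' hs (g · a))) :=
    (ContinuousOn.finset_sup'_apply hs hcont a (left_mem_Icc.2 hab.le)).mono_of_mem_nhdsWithin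
      (Icc_mem_nhdsGT hab)
  refine ge_of_tendsto hlim ?_
  filter_upwards [Ioc_mem_nhdsGT hab] with a' ha'
  refine sup'_le_sup'_of_hasDerivWithinAt_nonpos hs ha'.2
    (fun j hj ↦ (hcont j hj).mono (Icc_subset_Icc_left ha'.1.le)) fun z hz j hj hmax ↦ ?_
  obtain ⟨d, hd, hder⟩ := hderiv z ⟨ha'.1.trans_le hz.1, hz.2⟩ j hj hmax
  exact ⟨d, hd, hder.hasDerivWithinAt⟩

end MaxPrinciple

namespace IsParticleSol

variable {f : ℝ → ℝ} {N : ℕ} {x₀ v₀ : ℕ → ℝ} {t' : ℝ} {x v : ℕ → ℝ → ℝ}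

theorem x_lt_x_succ (h : IsParticleSol f N x₀ v₀ t' x v)
    (hx₀ : ∀ i, 1 ≤ i → i < N → x₀ i < x₀ (i+1)) {t : ℝ} (ht : t ∈ Ico 0 t') {i : ℕ}
    (hi : 1 ≤ i) (hiN : i < N) : x i t < x (i+1) t := by
  rcases ht.1.eq_or_lt with rfl | ht0
  · rw [h.init i hi hiN.le, h.init (i+1) (by omega) hiN]
    exact hx₀ i hi hiN
  · exact h.order t ⟨ht0, ht.2⟩ i hi hiN

theorem v_apply_zero (h : IsParticleSol f N x₀ v₀ t' x v)
    (hx₀ : ∀ i, 1 ≤ i → i < N → x₀ i < x₀ (i+1)) (ht' : 0 < t') {j : ℕ} (hj : 1 ≤ j)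
    (hjN : j < N) : v j 0 = v₀ j := by
  rw [h.mass j hj hjN 0 ⟨le_rfl, ht'⟩, h.init (j+1) (by omega) hjN, h.init j hj hjN.le,
    mul_div_cancel_right₀ _ (sub_pos.2 (hx₀ j hj hjN)).ne']

theorem v_nonneg (h : IsParticleSol f N x₀ v₀ t' x v)
    (hx₀ : ∀ i, 1 ≤ i → i < N → x₀ i < x₀ (i+1)) (hv₀ : ∀ i, 1 ≤ i → i < N → 0 ≤ v₀ i)
    {t : ℝ} (ht : t ∈ Ico 0 t') {j : ℕ} (hjN : j ≤ N) : 0 ≤ v j t := by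
  rcases Nat.eq_zero_or_pos j with rfl | hj
  · rw [h.vzero]
  rcases hjN.eq_or_lt with rfl | hjN
  · rw [h.vN]
  rw [h.mass j hj hjN t ht]
  exact div_nonneg (mul_nonneg (hv₀ j hj hjN) (sub_pos.2 (hx₀ j hj hjN)).le)
    (sub_pos.2 (h.x_lt_x_succ hx₀ ht hj hjN)).le

theorem continuousOn_v (h : IsParticleSol f N x₀ v₀ t' x v)
    (hx₀ : ∀ i, 1 ≤ i → i < N → x₀ i < x₀ (i+1)) {j : ℕ} (hj : 1 ≤ j) (hjN : j < N) :
    ContinuousOn (v j) (Ico 0 t') :=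
  (continuousOn_const.div ((h.cont (j+1) (by omega) hjN).sub (h.cont j hj hjN.le))
    fun _ ht ↦ (sub_pos.2 (h.x_lt_x_succ hx₀ ht hj hjN)).ne').congr
    fun t ht ↦ h.mass j hj hjN t ht

theorem hasDerivAt_v (h : IsParticleSol f N x₀ v₀ t' x v)
    (hx₀ : ∀ i, 1 ≤ i → i < N → x₀ i < x₀ (i+1)) {j : ℕ} (hj : 1 ≤ j) (hjN : j < N) {z : ℝ}
    (hz : z ∈ Ioo 0 t') :
    HasDerivAt (v j) (-(v₀ j * (x₀ (j+1) - x₀ j)) *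
      (pV f (v j z) (v (j+1) z) - pV f (v (j-1) z) (v j z)) / (x (j+1) z - x j z) ^ 2) z := by
  have hgap : HasDerivAt (fun w ↦ x (j+1) w - x j w)
      (pV f (v j z) (v (j+1) z) - pV f (v (j-1) z) (v j z)) z := by
    have hnext := h.ode (j+1) (by omega) hjN z hz
    rw [Nat.add_sub_cancel] at hnext
    exact hnext.sub (h.ode j hj hjN.le z hz)
  have hquot := (hasDerivAt_const z (v₀ j * (x₀ (j+1) - x₀ j))).div hgap
    (sub_pos.2 (h.x_lt_x_succ hx₀ (Ioo_subset_Ico_self hz) hj hjN)).ne'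
  refine (hquot.congr_of_eventuallyEq ?_).congr_deriv (by ring)
  filter_upwards [isOpen_Ioo.mem_nhds hz] with w hw
  exact h.mass j hj hjN w (Ioo_subset_Ico_self hw)

theorem exists_hasDerivAt_v_nonpos (h : IsParticleSol f N x₀ v₀ t' x v)
    (hx₀ : ∀ i, 1 ≤ i → i < N → x₀ i < x₀ (i+1)) {K : ℝ≥0} (hf : LipschitzWith K f)
    (hf0 : f 0 = 0) {j : ℕ} (hj : 1 ≤ j) (hjN : j < N) (hv₀j : 0 ≤ v₀ j) {z : ℝ}
    (hz : z ∈ Ioo 0 t') (hl : v (j-1) z ≤ v j z) (hr : v (j+1) z ≤ v j z) :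
    ∃ d ≤ 0, HasDerivAt (v j) d z := by
  refine ⟨_, ?_, h.hasDerivAt_v hx₀ hj hjN hz⟩
  have hm : 0 ≤ v₀ j * (x₀ (j+1) - x₀ j) := mul_nonneg hv₀j (sub_pos.2 (hx₀ j hj hjN)).le
  have hV : 0 ≤ pV f (v j z) (v (j+1) z) - pV f (v (j-1) z) (v j z) :=
    sub_nonneg.2 (pV_le_pV_of_local_max hf hf0 hl hr)
  exact div_nonpos_of_nonpos_of_nonneg (by nlinarith) (sq_nonneg _)

theorem v_le (h : IsParticleSol f N x₀ v₀ t' x v)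
    (hx₀ : ∀ i, 1 ≤ i → i < N → x₀ i < x₀ (i+1)) (hv₀ : ∀ i, 1 ≤ i → i < N → 0 ≤ v₀ i)
    {K : ℝ≥0} (hf : LipschitzWith K f) (hf0 : f 0 = 0) {M : ℝ}
    (hM : ∀ i, 1 ≤ i → i < N → v₀ i ≤ M) {t : ℝ} (ht : t ∈ Ico 0 t') {j : ℕ} (hj : 1 ≤ j)
    (hjN : j < N) : v j t ≤ M := by
  have hs : (Finset.Ico 1 N).Nonempty := ⟨j, Finset.mem_Ico.2 ⟨hj, hjN⟩⟩
  have hsub : Icc 0 t ⊆ Ico 0 t' := Icc_subset_Ico_right ht.2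
  have hdecr := sup'_le_sup'_of_hasDerivAt_nonpos hs (g := v) ht.1
    (fun k hk ↦ (h.continuousOn_v hx₀ (Finset.mem_Ico.1 hk).1 (Finset.mem_Ico.1 hk).2).mono hsub)
    fun z hz k hk hmax ↦ by
      obtain ⟨hk1, hkN⟩ := Finset.mem_Ico.1 hk
      have hz' : z ∈ Ioo 0 t' := ⟨hz.1, hz.2.trans ht.2⟩
      have hdom : ∀ l ≤ N, v l z ≤ v k z := by
        intro l hlN
        obtain rfl | rfl | hl : l = 0 ∨ l = N ∨ l ∈ Finset.Ico 1 N := by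
          rw [Finset.mem_Ico]; omega
        · simpa [h.vzero] using h.v_nonneg hx₀ hv₀ (Ioo_subset_Ico_self hz') hkN.le
        · simpa [h.vN] using h.v_nonneg hx₀ hv₀ (Ioo_subset_Ico_self hz') hkN.le
        · exact hmax l hl
      exact h.exists_hasDerivAt_v_nonpos hx₀ hf hf0 hk1 hkN (hv₀ k hk1 hkN) hz'
        (hdom _ (by omega)) (hdom _ hkN)
  calc v j t ≤ (Finset.Ico 1 N).sup' hs (v · t) :=
        Finset.le_sup' (v · t) (Finset.mem_Ico.2 ⟨hj, hjN⟩)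
    _ ≤ (Finset.Ico 1 N).sup' hs (v · 0) := hdecr
    _ ≤ M := Finset.sup'_le _ _ fun k hk ↦ by
      obtain ⟨hk1, hkN⟩ := Finset.mem_Ico.1 hk
      rw [h.v_apply_zero hx₀ (ht.1.trans_lt ht.2) hk1 hkN]
      exact hM k hk1 hkN

theorem pV_sub_pV_le (h : IsParticleSol f N x₀ v₀ t' x v)
    (hx₀ : ∀ i, 1 ≤ i → i < N → x₀ i < x₀ (i+1)) (hv₀ : ∀ i, 1 ≤ i → i < N → 0 ≤ v₀ i)
    {K : ℝ≥0} (hf : LipschitzWith K f) (hf0 : f 0 = 0) {M : ℝ}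
    (hM : ∀ i, 1 ≤ i → i < N → v₀ i ≤ M) {t : ℝ} (ht : t ∈ Ico 0 t') {i : ℕ} (hi : 1 ≤ i)
    (hiN : i < N) :
    pV f (v i t) (v (i+1) t) - pV f (v (i-1) t) (v i t) ≤
      2 * K * M / (v₀ i * (x₀ (i+1) - x₀ i)) * (x (i+1) t - x i t) := by
  have hgap : 0 < x (i+1) t - x i t := sub_pos.2 (h.x_lt_x_succ hx₀ ht hi hiN)
  have hgap₀ : 0 < x₀ (i+1) - x₀ i := sub_pos.2 (hx₀ i hi hiN)
  rcases (hv₀ i hi hiN).eq_or_lt with hzero | hpos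
  · have hvi : v i t = 0 := by rw [h.mass i hi hiN t ht, ← hzero, zero_mul, zero_div]
    rw [hvi, ← hzero, zero_mul, div_zero, zero_mul, sub_nonpos]
    exact pV_le_pV_of_local_min hf hf0 (h.v_nonneg hx₀ hv₀ ht (by omega))
      (h.v_nonneg hx₀ hv₀ ht hiN)
  · have hvgap : v i t * (x (i+1) t - x i t) = v₀ i * (x₀ (i+1) - x₀ i) := by
      rw [h.mass i hi hiN t ht]
      field_simp
    have hm : 0 < v₀ i * (x₀ (i+1) - x₀ i) := mul_pos hpos hgap₀
    calc _ ≤ 2 * (K : ℝ) := by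
          linarith [(abs_le.1 (abs_pV_le hf hf0 (v i t) (v (i+1) t))).2,
            (abs_le.1 (abs_pV_le hf hf0 (v (i-1) t) (v i t))).1]
      _ = 2 * K * (v i t * (x (i+1) t - x i t)) / (v₀ i * (x₀ (i+1) - x₀ i)) := by
          rw [hvgap, mul_div_cancel_right₀ _ hm.ne']
      _ ≤ 2 * K * (M * (x (i+1) t - x i t)) / (v₀ i * (x₀ (i+1) - x₀ i)) := by
          gcongr
          exact h.v_le hx₀ hv₀ hf hf0 hM ht hi hiN
      _ = _ := by ring

theorem exists_pV_sub_pV_le_mul (h : IsParticleSol f N x₀ v₀ t' x v)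
    (hx₀ : ∀ i, 1 ≤ i → i < N → x₀ i < x₀ (i+1)) (hv₀ : ∀ i, 1 ≤ i → i < N → 0 ≤ v₀ i)
    {K : ℝ≥0} (hf : LipschitzWith K f) (hf0 : f 0 = 0) :
    ∃ C, 0 ≤ C ∧ ∀ t ∈ Ico 0 t', ∀ i, 1 ≤ i → i < N →
      pV f (v i t) (v (i+1) t) - pV f (v (i-1) t) (v i t) ≤ C * (x (i+1) t - x i t) := by
  have hv₀' : ∀ j ∈ Finset.Ico 1 N, 0 ≤ v₀ j :=
    fun j hj ↦ hv₀ j (Finset.mem_Ico.1 hj).1 (Finset.mem_Ico.1 hj).2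
  set M := ∑ j ∈ Finset.Ico 1 N, v₀ j
  set c : ℕ → ℝ := fun i ↦ 2 * K * M / (v₀ i * (x₀ (i+1) - x₀ i))
  have hM : ∀ j, 1 ≤ j → j < N → v₀ j ≤ M :=
    fun j hj hjN ↦ Finset.single_le_sum hv₀' (Finset.mem_Ico.2 ⟨hj, hjN⟩)
  have hc : ∀ i ∈ Finset.Ico 1 N, 0 ≤ c i := fun i hi ↦
    div_nonneg (mul_nonneg (by positivity) (Finset.sum_nonneg hv₀')) (mul_nonneg (hv₀' i hi)
      (sub_pos.2 (hx₀ i (Finset.mem_Ico.1 hi).1 (Finset.mem_Ico.1 hi).2)).le)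
  refine ⟨∑ i ∈ Finset.Ico 1 N, c i, Finset.sum_nonneg hc, fun t ht i hi hiN ↦ ?_⟩
  exact (h.pV_sub_pV_le hx₀ hv₀ hf hf0 hM ht hi hiN).trans
    (mul_le_mul_of_nonneg_right (Finset.single_le_sum hc (Finset.mem_Ico.2 ⟨hi, hiN⟩))
      (sub_pos.2 (h.x_lt_x_succ hx₀ ht hi hiN)).le)

end IsParticleSol

theorem monotone_of_monotoneOn_Iic_Icc_Ici {α β : Type*} [LinearOrder α] [Preorder β]
    {h : α → β} {X : ℕ → α} {N : ℕ} (hN : 1 ≤ N) (hX : ∀ i, 1 ≤ i → i < N → X i ≤ X (i+1))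
    (hl : MonotoneOn h (Iic (X 1)))
    (hmid : ∀ i, 1 ≤ i → i < N → MonotoneOn h (Icc (X i) (X (i+1))))
    (hr : MonotoneOn h (Ici (X N))) : Monotone h := by
  have hle : ∀ n, 1 ≤ n → n ≤ N → MonotoneOn h (Iic (X n)) := by
    intro n hn hnN
    induction n, hn using Nat.le_induction with
    | base => exact hl
    | succ n hn ih =>
      rw [← Iic_union_Icc_eq_Iic (hX n hn hnN)]
      exact (ih (by omega)).union_right (hmid n hn hnN) isGreatest_Iic
        (isLeast_Icc (hX n hn hnN))
  exact (hle N hN le_rfl).Iic_union_Ici hr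

theorem monotone_mul_sub_affine {C a b α β : ℝ} (hab : a < b) (hslope : β - α ≤ C * (b - a)) :
    Monotone fun y ↦ C * y - ((b - y) * α + (y - a) * β) / (b - a) := by
  intro y z hyz
  have hdiff : ((b - z) * α + (z - a) * β) / (b - a) - ((b - y) * α + (y - a) * β) / (b - a) =
      (z - y) * ((β - α) / (b - a)) := by
    field_simp
    ring
  have hcoef : (β - α) / (b - a) ≤ C := (div_le_iff₀ (sub_pos.2 hab)).2 hslope
  nlinarith [sub_nonneg.2 hyz]

theorem sub_mul_sub_le_of_monotone {g : ℝ → ℝ} {C : ℝ} (hg : Monotone fun y ↦ C * y - g y)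
    (p q : ℝ) : (g p - g q) * (p - q) ≤ C * (p - q) ^ 2 := by
  rcases le_total q p with hqp | hpq
  · nlinarith [hg hqp, sub_nonneg.2 hqp]
  · nlinarith [hg hpq, sub_nonneg.2 hpq]

theorem one_sided_lipschitz_A_general
    (f : ℝ → ℝ) (K : ℝ≥0) (hf : LipschitzWith K f)
    (hf0 : f 0 = 0)
    (N : ℕ) (hN : 2 ≤ N) (x₀ v₀ : ℕ → ℝ)
    (hx₀ : ∀ i, 1 ≤ i → i < N → x₀ i < x₀ (i+1))
    (hv₀nn : ∀ i, 1 ≤ i → i < N → 0 ≤ v₀ i)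
    (t' : ℝ) (x v : ℕ → ℝ → ℝ)
    (hsol : IsParticleSol f N x₀ v₀ t' x v)
    (A : ℝ → ℝ → ℝ)
    (hAl : ∀ t ∈ Set.Ico (0:ℝ) t', ∀ y, y ≤ x 1 t → A y t = pV f 0 (v 1 t))
    (hAr : ∀ t ∈ Set.Ico (0:ℝ) t', ∀ y, x N t ≤ y → A y t = pV f (v (N-1) t) 0)
    (hAmid : ∀ t ∈ Set.Ico (0:ℝ) t', ∀ i, 1 ≤ i → i < N →
      ∀ y ∈ Set.Icc (x i t) (x (i+1) t),
        A y t = ((x (i+1) t - y) * pV f (v (i-1) t) (v i t)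
          + (y - x i t) * pV f (v i t) (v (i+1) t)) / (x (i+1) t - x i t))
    :
    ∃ C : ℝ, 0 ≤ C ∧ ∀ t ∈ Set.Ico (0:ℝ) t', ∀ p q : ℝ,
      (A p t - A q t) * (p - q) ≤ C * (p - q) ^ 2 := by
  obtain ⟨C, hC, hslope⟩ := hsol.exists_pV_sub_pV_le_mul hx₀ hv₀nn hf hf0
  refine ⟨C, hC, fun t ht ↦ sub_mul_sub_le_of_monotone ?_⟩
  have hx : ∀ i, 1 ≤ i → i < N → x i t < x (i+1) t := fun i ↦ hsol.x_lt_x_succ hx₀ ht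
  refine monotone_of_monotoneOn_Iic_Icc_Ici (X := (x · t)) (by omega)
    (fun i hi hiN ↦ (hx i hi hiN).le) ?outer_left (fun i hi hiN ↦ ?_) ?outer_right
  case outer_left =>
    intro y hy z hz hyz
    simp only [hAl t ht y hy, hAl t ht z hz]
    gcongr
  case outer_right =>
    intro y hy z hz hyz
    simp only [hAr t ht y hy, hAr t ht z hz]
    gcongr
  exact ((monotone_mul_sub_affine (hx i hi hiN) (hslope t ht i hi hiN)).monotoneOn _).congr
    fun y hy ↦ by rw [hAmid t ht i hi hiN y hy]

/-- **One-sided Lipschitz velocity field.** There is a constant `C ≥ 0` with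
`(A(x,t) − A(y,t))(x − y) ≤ C (x − y)²` for all `t ∈ [0, tʹ)` and all `x, y ∈ ℝ`. -/
theorem one_sided_lipschitz_A
    (f : ℝ → ℝ) (K : ℝ≥0) (hf : LipschitzWith K f)
    (hf0 : f 0 = 0) (hfd : DifferentiableAt ℝ f 0)
    (N : ℕ) (hN : 2 ≤ N) (x₀ v₀ : ℕ → ℝ)
    (hx₀ : ∀ i, 1 ≤ i → i < N → x₀ i < x₀ (i+1))
    (hv₀nn : ∀ i, 1 ≤ i → i < N → 0 ≤ v₀ i)
    (hv₀0 : v₀ 0 = 0) (hv₀N : v₀ N = 0)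
    (t' : ℝ) (ht' : 0 < t') (x v : ℕ → ℝ → ℝ)
    (hsol : IsParticleSol f N x₀ v₀ t' x v)
    (A : ℝ → ℝ → ℝ)
    (hAl : ∀ t ∈ Set.Ico (0:ℝ) t', ∀ y, y ≤ x 1 t → A y t = pV f 0 (v 1 t))
    (hAr : ∀ t ∈ Set.Ico (0:ℝ) t', ∀ y, x N t ≤ y → A y t = pV f (v (N-1) t) 0)
    (hAmid : ∀ t ∈ Set.Ico (0:ℝ) t', ∀ i, 1 ≤ i → i < N →
      ∀ y ∈ Set.Icc (x i t) (x (i+1) t),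
        A y t = ((x (i+1) t - y) * pV f (v (i-1) t) (v i t)
          + (y - x i t) * pV f (v i t) (v (i+1) t)) / (x (i+1) t - x i t))
    :
    ∃ C : ℝ, 0 ≤ C ∧ ∀ t ∈ Set.Ico (0:ℝ) t', ∀ p q : ℝ,
      (A p t - A q t) * (p - q) ≤ C * (p - q) ^ 2 :=
  one_sided_lipschitz_A_general f K hf hf0 N hN x₀ v₀ hx₀ hv₀nn t' x v hsol A hAl hAr hAmid
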